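/- arXiv:2602.11612 — 2 statements merged into one kernel-verified Lean document; each statement's English description precedes it below -/
import Mathlib

section
/- For all integers a, b, c, there exists a surjective group homomorphism from G(a,b,c) = ⟨x, y | (xy)^a x^b, (xy)^a y^c⟩ onto the triangle-type group Δ(a,b,c) = ⟨x, y, z | x^b, y^c, z^a, x y z⟩. -/
/-- The group `G(a,b,c) = ⟨x, y | (xy)^a x^b, (xy)^a y^c⟩`. -/
abbrev G (a b c : ℤ) : Type :=
  PresentedGroup ({(FreeGroup.of 0 * FreeGroup.of 1) ^ a * (FreeGroup.of 0) ^ b,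
    (FreeGroup.of 0 * FreeGroup.of 1) ^ a * (FreeGroup.of 1) ^ c} : Set (FreeGroup (Fin 2)))

/-- The triangle-type group `Δ(a,b,c) = ⟨x, y, z | x^b, y^c, z^a, x y z⟩`. -/
abbrev Δ (a b c : ℤ) : Type :=
  PresentedGroup ({(FreeGroup.of 0) ^ b, (FreeGroup.of 1) ^ c, (FreeGroup.of 2) ^ a,
    FreeGroup.of 0 * FreeGroup.of 1 * FreeGroup.of 2} : Set (FreeGroup (Fin 3)))

lemma mk_rel_one {α : Type*} {rels : Set (FreeGroup α)} {r : FreeGroup α} (hr : r ∈ rels) :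
    PresentedGroup.mk rels r = 1 :=
  (QuotientGroup.eq_one_iff r).mpr (Subgroup.subset_normalClosure hr)

theorem stmt_2 (a b c : ℤ) :
    ∃ f : G a b c →* Δ a b c, Function.Surjective f := by
  set X : Δ a b c := PresentedGroup.of 0 with hX
  set Y : Δ a b c := PresentedGroup.of 1 with hY
  set Z : Δ a b c := PresentedGroup.of 2 with hZ
  have hXb : X ^ b = 1 := by
    have := mk_rel_one (rels := {(FreeGroup.of 0) ^ b, (FreeGroup.of 1) ^ c, (FreeGroup.of 2) ^ a,
      FreeGroup.of 0 * FreeGroup.of 1 * FreeGroup.of 2}) (r := (FreeGroup.of 0 : FreeGroup (Fin 3)) ^ b) (by simp)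
    simpa [hX, PresentedGroup.of] using this
  have hYc : Y ^ c = 1 := by
    have := mk_rel_one (rels := {(FreeGroup.of 0) ^ b, (FreeGroup.of 1) ^ c, (FreeGroup.of 2) ^ a,
      FreeGroup.of 0 * FreeGroup.of 1 * FreeGroup.of 2}) (r := (FreeGroup.of 1 : FreeGroup (Fin 3)) ^ c) (by simp)
    simpa [hY, PresentedGroup.of] using this
  have hZa : Z ^ a = 1 := by
    have := mk_rel_one (rels := {(FreeGroup.of 0) ^ b, (FreeGroup.of 1) ^ c, (FreeGroup.of 2) ^ a,
      FreeGroup.of 0 * FreeGroup.of 1 * FreeGroup.of 2}) (r := (FreeGroup.of 2 : FreeGroup (Fin 3)) ^ a) (by simp)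
    simpa [hZ, PresentedGroup.of] using this
  have hXYZ : X * Y * Z = 1 := by
    have := mk_rel_one (rels := {(FreeGroup.of 0) ^ b, (FreeGroup.of 1) ^ c, (FreeGroup.of 2) ^ a,
      FreeGroup.of 0 * FreeGroup.of 1 * FreeGroup.of 2})
      (r := FreeGroup.of 0 * FreeGroup.of 1 * (FreeGroup.of 2 : FreeGroup (Fin 3))) (by simp)
    simpa [hX, hY, hZ, PresentedGroup.of] using this
  have hXY : X * Y = Z⁻¹ := by
    rw [eq_inv_iff_mul_eq_one]; exact hXYZ
  have hXYa : (X * Y) ^ a = 1 := by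
    rw [hXY, inv_zpow, hZa, inv_one]
  set g : Fin 2 → Δ a b c := ![X, Y] with hg
  have hrels : ∀ r ∈ ({(FreeGroup.of 0 * FreeGroup.of 1) ^ a * (FreeGroup.of 0) ^ b,
      (FreeGroup.of 0 * FreeGroup.of 1) ^ a * (FreeGroup.of 1) ^ c} : Set (FreeGroup (Fin 2))),
      FreeGroup.lift g r = 1 := by
    intro r hr
    rcases hr with h | h <;> subst h <;>
      simp [hg, hXYa, hXb, hYc]
  refine ⟨PresentedGroup.toGroup hrels, ?_⟩
  rw [← MonoidHom.range_eq_top]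
  rw [eq_top_iff, ← PresentedGroup.closure_range_of, Subgroup.closure_le]
  rintro _ ⟨i, rfl⟩
  fin_cases i
  · exact ⟨PresentedGroup.of 0, by simp [hg, hX]⟩
  · exact ⟨PresentedGroup.of 1, by simp [hg, hY]⟩
  · refine ⟨(PresentedGroup.of 0 * PresentedGroup.of 1)⁻¹, ?_⟩
    simp only [map_inv, map_mul, PresentedGroup.toGroup.of]
    show (g 0 * g 1)⁻¹ = Z
    rw [hg]; show (X * Y)⁻¹ = Z
    rw [hXY, inv_inv]
end

section
/- Let a, b, c be integers with |a| ≥ 2, |b| ≥ 2, and |c| ≥ 2. Then the group G(a,b,c) = ⟨x, y | (xy)^a x^b, (xy)^a y^c⟩ is nontrivial, i.e., it has an element different from 1. -/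
open Matrix Complex Real

noncomputable section AuxStmt9

abbrev M2 := Matrix (Fin 2) (Fin 2) ℂ

lemma cayley2 (M : M2) : M * M = M.trace • M - M.det • 1 := by
  ext i j
  fin_cases i <;> fin_cases j <;>
    simp [Matrix.mul_apply, Matrix.trace_fin_two, Matrix.det_fin_two,
      Fin.sum_univ_two, Matrix.one_apply] <;> ring

lemma pow_proj (M : M2ˣ) (v : ℂ) (e f : M2)
    (hM : (M : M2) = v • e + v⁻¹ • f)
    (hee : e * e = e) (hff : f * f = f) (hef : e * f = 0) (hfe : f * e = 0)
    (h1 : e + f = 1) :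
    ∀ n : ℕ, ((M ^ n : M2ˣ) : M2) = v ^ n • e + (v⁻¹) ^ n • f := by
  intro n
  induction n with
  | zero => simp [h1]
  | succ n ih =>
      rw [pow_succ, Units.val_mul, ih, hM]
      simp only [add_mul, mul_add, smul_mul_assoc, mul_smul_comm, smul_smul,
        hee, hff, hef, hfe, smul_zero, add_zero, zero_add, pow_succ]
      ring_nf

lemma inv_proj (M : M2ˣ) (v : ℂ) (hv : v ≠ 0) (e f : M2)
    (hM : (M : M2) = v • e + v⁻¹ • f)
    (hee : e * e = e) (hff : f * f = f) (hef : e * f = 0) (hfe : f * e = 0)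
    (h1 : e + f = 1) :
    ((M⁻¹ : M2ˣ) : M2) = v⁻¹ • e + v • f := by
  apply Units.inv_eq_of_mul_eq_one_right
  rw [hM]
  simp only [add_mul, mul_add, smul_mul_assoc, mul_smul_comm, smul_smul,
    hee, hff, hef, hfe, smul_zero, add_zero, zero_add,
    mul_inv_cancel₀ hv, inv_mul_cancel₀ hv, one_smul]
  exact h1

lemma key (M : M2ˣ) (v : ℂ) (hv : v ≠ 0) (hv2 : v * v ≠ 1)
    (hdet : (M : M2).det = 1) (htr : (M : M2).trace = v + v⁻¹)
    (n : ℤ) (hvn : v ^ n = -1) : M ^ n = -1 := by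
  have hvv : v ≠ v⁻¹ := by
    intro h
    apply hv2
    nth_rewrite 2 [h]
    exact mul_inv_cancel₀ hv
  have hd : v - v⁻¹ ≠ 0 := sub_ne_zero.mpr hvv
  set d : ℂ := v - v⁻¹ with hd_def
  set e : M2 := d⁻¹ • ((M : M2) - v⁻¹ • 1) with he_def
  set f : M2 := d⁻¹ • (v • (1 : M2) - (M : M2)) with hf_def
  have h1 : e + f = 1 := by
    rw [he_def, hf_def, ← smul_add]
    have : ((M : M2) - v⁻¹ • 1) + (v • (1:M2) - (M:M2)) = d • 1 := by
      rw [hd_def, sub_smul]; abel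
    rw [this, smul_smul, inv_mul_cancel₀ hd, one_smul]
  have hCH : (M : M2) * (M : M2) = (v + v⁻¹) • (M : M2) - 1 := by
    rw [cayley2, htr, hdet, one_smul]
  have hef : e * f = 0 := by
    rw [he_def, hf_def, smul_mul_assoc, mul_smul_comm, smul_smul]
    have expand : ((M : M2) - v⁻¹ • 1) * (v • (1:M2) - (M:M2))
        = (v+v⁻¹) • (M:M2) - (M:M2)*(M:M2) - (v*v⁻¹) • 1 := by
      simp only [sub_mul, mul_sub, smul_mul_assoc, mul_smul_comm, mul_one, one_mul,
        smul_smul, add_smul, smul_sub]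
      abel
    rw [expand, hCH, mul_inv_cancel₀ hv, one_smul]
    simp
  have hfe : f * e = 0 := by
    rw [he_def, hf_def, smul_mul_assoc, mul_smul_comm, smul_smul]
    have expand : (v • (1:M2) - (M:M2)) * ((M : M2) - v⁻¹ • 1)
        = (v+v⁻¹) • (M:M2) - (M:M2)*(M:M2) - (v⁻¹*v) • 1 := by
      simp only [sub_mul, mul_sub, smul_mul_assoc, mul_smul_comm, mul_one, one_mul,
        smul_smul, add_smul, smul_sub]
      abel
    rw [expand, hCH, inv_mul_cancel₀ hv, one_smul]
    simp
  have hee : e * e = e := by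
    have h2 := congrArg (fun x => e * x) h1
    simpa [mul_add, hef] using h2
  have hff : f * f = f := by
    have h2 := congrArg (fun x => f * x) h1
    simpa [mul_add, hfe] using h2
  have hM : (M : M2) = v • e + v⁻¹ • f := by
    rw [he_def, hf_def, smul_comm v d⁻¹, smul_comm v⁻¹ d⁻¹, ← smul_add, smul_sub, smul_sub,
      smul_smul v v⁻¹, mul_inv_cancel₀ hv, smul_smul v⁻¹ v, inv_mul_cancel₀ hv,
      one_smul]
    have : (v • (M:M2) - 1 + (1 - v⁻¹ • (M:M2))) = d • (M:M2) := by
      rw [hd_def, sub_smul]; abel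
    rw [this, smul_smul, inv_mul_cancel₀ hd, one_smul]
  have hz : ((M ^ n : M2ˣ) : M2) = v ^ n • e + v ^ (-n) • f := by
    rcases Int.eq_nat_or_neg n with ⟨m, rfl | rfl⟩
    · rw [zpow_natCast, pow_proj M v e f hM hee hff hef hfe h1 m]
      simp [_root_.zpow_neg, zpow_natCast, inv_pow]
    · have hMi : ((M⁻¹ : M2ˣ) : M2) = v⁻¹ • e + v • f :=
        inv_proj M v hv e f hM hee hff hef hfe h1
      have hMi' : ((M⁻¹ : M2ˣ) : M2) = v⁻¹ • e + (v⁻¹)⁻¹ • f := by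
        rw [hMi, inv_inv]
      rw [_root_.zpow_neg, zpow_natCast, ← inv_pow,
        pow_proj M⁻¹ v⁻¹ e f hMi' hee hff hef hfe h1 m, inv_inv]
      simp [_root_.zpow_neg, zpow_natCast, inv_pow]
  have hvn' : v ^ (-n) = -1 := by
    rw [_root_.zpow_neg, hvn]; norm_num
  apply Units.ext
  rw [hz, hvn, hvn', Units.val_neg, Units.val_one, neg_smul, neg_smul, one_smul, one_smul,
    ← neg_add, h1]


lemma int_ne_zero_of_abs (a : ℤ) (ha : 2 ≤ |a|) : (a : ℂ) ≠ 0 := by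
  have : a ≠ 0 := by rintro rfl; simp at ha
  exact_mod_cast Int.cast_ne_zero.mpr this

lemma root_pow (a : ℤ) (ha : 2 ≤ |a|) : Complex.exp (↑π / ↑a * I) ^ a = -1 := by
  have ha0 : (a : ℂ) ≠ 0 := int_ne_zero_of_abs a ha
  have h : (a : ℂ) * (↑π / ↑a * I) = ↑π * I := by field_simp
  rw [← Complex.exp_int_mul, h, Complex.exp_pi_mul_I]

lemma root_sq_ne (a : ℤ) (ha : 2 ≤ |a|) :
    Complex.exp (↑π / ↑a * I) * Complex.exp (↑π / ↑a * I) ≠ 1 := by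
  have ha0 : (a : ℂ) ≠ 0 := int_ne_zero_of_abs a ha
  have hπ : (π : ℂ) ≠ 0 := by exact_mod_cast Real.pi_ne_zero
  intro hexp
  rw [← Complex.exp_add] at hexp
  rcases Complex.exp_eq_one_iff.mp hexp with ⟨k, hk⟩
  have hI : (I : ℂ) ≠ 0 := Complex.I_ne_zero
  have hak : (a : ℂ) * (k : ℂ) = 1 := by
    field_simp at hk
    have h2 : (2 * (π:ℂ) * I) * ((a:ℂ) * (k:ℂ)) = (2 * (π:ℂ) * I) * 1 := by
      linear_combination -(π:ℂ) * I * hk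
    have h3 := mul_left_cancel₀ (by simp [hπ, hI] : (2 * (π:ℂ) * I) ≠ 0) h2
    simpa using h3
  have hak' : (a * k : ℤ) = 1 := by exact_mod_cast hak
  have := Int.isUnit_iff.mp (IsUnit.of_mul_eq_one k hak')
  rcases this with rfl | rfl <;> simp at ha

end AuxStmt9

theorem stmt_9 (a b c : ℤ) (ha : 2 ≤ |a|) (hb : 2 ≤ |b|) (hc : 2 ≤ |c|) :
    ∃ g : G a b c, g ≠ 1 := by
  classical
  set u : ℂ := Complex.exp (↑π / ↑b * I) with hu_def
  set w : ℂ := Complex.exp (↑π / ↑c * I) with hw_def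
  set v : ℂ := Complex.exp (↑π / ↑a * I) with hv_def
  have hu0 : u ≠ 0 := Complex.exp_ne_zero _
  have hw0 : w ≠ 0 := Complex.exp_ne_zero _
  have hv0 : v ≠ 0 := Complex.exp_ne_zero _
  set μ : ℂ := (v + v⁻¹) - (u * w + u⁻¹ * w⁻¹) with hμ_def
  set Am : M2 := !![u, 1; 0, u⁻¹] with hAm
  set Ai : M2 := !![u⁻¹, -1; 0, u] with hAi
  set Bm : M2 := !![w, 0; μ, w⁻¹] with hBm
  set Bi : M2 := !![w⁻¹, 0; -μ, w] with hBi
  have hA1 : Am * Ai = 1 := by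
    rw [hAm, hAi]
    ext i j
    fin_cases i <;> fin_cases j <;>
      simp [Matrix.mul_apply, Fin.sum_univ_two, Matrix.one_apply,
        mul_inv_cancel₀ hu0, inv_mul_cancel₀ hu0, mul_comm]
  have hA2 : Ai * Am = 1 := by
    rw [hAm, hAi]
    ext i j
    fin_cases i <;> fin_cases j <;>
      simp [Matrix.mul_apply, Fin.sum_univ_two, Matrix.one_apply,
        mul_inv_cancel₀ hu0, inv_mul_cancel₀ hu0, mul_comm]
  have hB1 : Bm * Bi = 1 := by
    rw [hBm, hBi]
    ext i j
    fin_cases i <;> fin_cases j <;>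
      simp [Matrix.mul_apply, Fin.sum_univ_two, Matrix.one_apply,
        mul_inv_cancel₀ hw0, inv_mul_cancel₀ hw0, mul_comm]
  have hB2 : Bi * Bm = 1 := by
    rw [hBm, hBi]
    ext i j
    fin_cases i <;> fin_cases j <;>
      simp [Matrix.mul_apply, Fin.sum_univ_two, Matrix.one_apply,
        mul_inv_cancel₀ hw0, inv_mul_cancel₀ hw0, mul_comm]
  set A : M2ˣ := ⟨Am, Ai, hA1, hA2⟩ with hA_def
  set B : M2ˣ := ⟨Bm, Bi, hB1, hB2⟩ with hB_def
  have hAkey : A ^ b = -1 := by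
    apply key A u hu0 (root_sq_ne b hb) _ _ b (root_pow b hb)
    · show Am.det = 1
      rw [hAm, Matrix.det_fin_two_of]
      simp [mul_inv_cancel₀ hu0]
    · show Am.trace = u + u⁻¹
      rw [hAm, Matrix.trace_fin_two_of]
  have hBkey : B ^ c = -1 := by
    apply key B w hw0 (root_sq_ne c hc) _ _ c (root_pow c hc)
    · show Bm.det = 1
      rw [hBm, Matrix.det_fin_two_of]
      simp [mul_inv_cancel₀ hw0]
    · show Bm.trace = w + w⁻¹
      rw [hBm, Matrix.trace_fin_two_of]
  have hABval : ((A * B : M2ˣ) : M2) = Am * Bm := rfl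
  have hABkey : (A * B) ^ a = -1 := by
    apply key (A * B) v hv0 (root_sq_ne a ha) _ _ a (root_pow a ha)
    · rw [hABval, Matrix.det_mul, hAm, hBm, Matrix.det_fin_two_of, Matrix.det_fin_two_of]
      simp [mul_inv_cancel₀ hu0, mul_inv_cancel₀ hw0]
    · rw [hABval, hAm, hBm, Matrix.mul_fin_two, Matrix.trace_fin_two_of, hμ_def]
      ring
  set f : Fin 2 → M2ˣ := ![A, B] with hf_def
  have hrel : ∀ r ∈ ({(FreeGroup.of 0 * FreeGroup.of 1) ^ a * (FreeGroup.of 0) ^ b,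
      (FreeGroup.of 0 * FreeGroup.of 1) ^ a * (FreeGroup.of 1) ^ c} :
      Set (FreeGroup (Fin 2))), FreeGroup.lift f r = 1 := by
    intro r hr
    simp only [Set.mem_insert_iff, Set.mem_singleton_iff] at hr
    rcases hr with rfl | rfl
    · simp only [_root_.map_mul, _root_.map_zpow, FreeGroup.lift_apply_of]
      show ((f 0) * (f 1)) ^ a * (f 0) ^ b = 1
      have h0 : f 0 = A := rfl
      have h1 : f 1 = B := rfl
      rw [h0, h1, hABkey, hAkey, neg_mul_neg, one_mul]
    · simp only [_root_.map_mul, _root_.map_zpow, FreeGroup.lift_apply_of]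
      show ((f 0) * (f 1)) ^ a * (f 1) ^ c = 1
      have h0 : f 0 = A := rfl
      have h1 : f 1 = B := rfl
      rw [h0, h1, hABkey, hBkey, neg_mul_neg, one_mul]
  refine ⟨PresentedGroup.of 0, fun hone => ?_⟩
  have h2 := congrArg (PresentedGroup.toGroup hrel) hone
  rw [PresentedGroup.toGroup.of, _root_.map_one] at h2
  have h3 : ((f 0 : M2ˣ) : M2) 0 1 = (1 : M2) 0 1 := by rw [h2, Units.val_one]
  have h4 : ((f 0 : M2ˣ) : M2) 0 1 = 1 := by
    show (Am : M2) 0 1 = 1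
    rw [hAm]
    simp
  rw [h4] at h3
  simp [Matrix.one_apply] at h3
end
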